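/- arXiv:0809.0911 — 10 statements merged into one kernel-verified Lean document; each statement's English description precedes it below -/
import Mathlib

section
/- Let A, B ∈ M₂(ℂ). Then for all X ∈ M₂(ℂ), AX + XB − (AX + XB)ᵀ = −tr((JA + BJ)X)·J, where J = [[0,1],[-1,0]]. -/
open Matrix

theorem stmt5 (A B X : Matrix (Fin 2) (Fin 2) ℂ) :
    A * X + X * B - (A * X + X * B)ᵀ
      = (-((!![0, 1; -1, 0] * A + B * !![0, 1; -1, 0]) * X).trace) • (!![0, 1; -1, 0] : Matrix (Fin 2) (Fin 2) ℂ) := by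
  ext i j
  simp [Matrix.mul_apply, Matrix.trace, Matrix.diag, Fin.sum_univ_two, Matrix.smul_apply]
  fin_cases i <;> fin_cases j <;> simp [Matrix.mul_apply, Matrix.vecMul, dotProduct, Fin.sum_univ_two] <;> ring
end

section
/- Let A, B ∈ M₂(ℂ). Then for all X ∈ M₂(ℂ), AX + XB + J(JBᵀJᵀ·X + X·JAᵀJᵀ)ᵀJᵀ = tr(X)·(A+B), where J = [[0,1],[-1,0]]. -/
/-!
For 2 × 2 matrices, conjugating the transpose by the rotation `J` yields the adjugate, which in
this dimension is additive, anti-multiplicative and an involution. The left-hand side thus becomes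
`A X + X B + adj X · B + A · adj X = A (X + adj X) + (X + adj X) B`, and `X + adj X = tr X · 1`.
-/

open Matrix

namespace Matrix

variable {R : Type*} [CommRing R]

theorem rotation_mul_transpose_mul_rotation_transpose_eq_adjugate
    (M : Matrix (Fin 2) (Fin 2) R) :
    !![0, 1; -1, 0] * Mᵀ * (!![0, 1; -1, 0] : Matrix (Fin 2) (Fin 2) R)ᵀ = adjugate M := by
  ext i j
  fin_cases i <;> fin_cases j <;>
    simp [adjugate_fin_two, mul_apply, vecMul, dotProduct, Fin.sum_univ_two]

theorem adjugate_add_fin_two (M N : Matrix (Fin 2) (Fin 2) R) :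
    adjugate (M + N) = adjugate M + adjugate N := by
  simp only [← rotation_mul_transpose_mul_rotation_transpose_eq_adjugate, transpose_add,
    Matrix.mul_add, Matrix.add_mul]

theorem adjugate_adjugate_fin_two (M : Matrix (Fin 2) (Fin 2) R) : adjugate (adjugate M) = M := by
  simpa using adjugate_adjugate M (by simp)

theorem add_adjugate_fin_two (M : Matrix (Fin 2) (Fin 2) R) : M + adjugate M = trace M • 1 := by
  ext i j
  fin_cases i <;> fin_cases j <;> simp [adjugate_fin_two, trace_fin_two]; ring

theorem mul_add_mul_add_adjugate_eq_trace_smul_fin_two (A B X : Matrix (Fin 2) (Fin 2) R) :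
    A * X + X * B + adjugate (adjugate B * X + X * adjugate A) = trace X • (A + B) := by
  rw [adjugate_add_fin_two, adjugate_mul_distrib, adjugate_mul_distrib, adjugate_adjugate_fin_two,
    adjugate_adjugate_fin_two]
  calc A * X + X * B + (adjugate X * B + A * adjugate X)
      = A * (X + adjugate X) + (X + adjugate X) * B := by noncomm_ring
    _ = trace X • (A + B) := by
      rw [add_adjugate_fin_two, Matrix.mul_smul, Matrix.smul_mul, Matrix.mul_one, Matrix.one_mul,
        smul_add]

end Matrix

theorem stmt6 (A B X : Matrix (Fin 2) (Fin 2) ℂ) :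
    letI J : Matrix (Fin 2) (Fin 2) ℂ := !![0, 1; -1, 0]
    A * X + X * B + J * ((J * Bᵀ * Jᵀ) * X + X * (J * Aᵀ * Jᵀ))ᵀ * Jᵀ
      = X.trace • (A + B) := by
  simp only [rotation_mul_transpose_mul_rotation_transpose_eq_adjugate]
  exact mul_add_mul_add_adjugate_eq_trace_smul_fin_two A B X
end

section
/- Let u, v ∈ ℂ³ and set τ_{u,v} = uvᵀ − ½⟨u,v⟩I₃. Then for all X ∈ M₃(ℂ), τ_{u,v}X + Xτ_{v,u} − (τ_{u,v}X + Xτ_{v,u})ᵀ = tr(σ_u X)·σ_v. -/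
/-!
Expanding τ gives `τ_{u,v} X + X τ_{v,u} = u (Xᵀv)ᵀ + (Xv) uᵀ − ⟨u,v⟩ X`. In dimension three every
antisymmetric matrix is a cross-product matrix: `xyᵀ − yxᵀ = σ_{y×x}` and `X − Xᵀ = σ_w` for the axial
vector `w` of `X`. Since `Xᵀv − Xv = v × w`, the antisymmetric part becomes
`σ_{(v×w)×u − ⟨u,v⟩w} = −⟨u,w⟩ σ_v` by the vector triple product, and `tr(σ_u X) = −⟨u,w⟩`.
-/

open Matrix

/-- The skew-symmetric matrix of cross product by `w`. -/
def sigmaM (w : Fin 3 → ℂ) : Matrix (Fin 3) (Fin 3) ℂ :=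
  !![0, -w 2, w 1; w 2, 0, -w 0; -w 1, w 0, 0]

/-- τ_{u,v} = u vᵀ − ½⟨u,v⟩ I₃. -/
noncomputable def tauM (u v : Fin 3 → ℂ) : Matrix (Fin 3) (Fin 3) ℂ :=
  vecMulVec u v - ((1 / 2 : ℂ) * (u ⬝ᵥ v)) • 1

def axialVector (A : Matrix (Fin 3) (Fin 3) ℂ) : Fin 3 → ℂ :=
  ![A 2 1 - A 1 2, A 0 2 - A 2 0, A 1 0 - A 0 1]

theorem sigmaM_sub (x y : Fin 3 → ℂ) : sigmaM (x - y) = sigmaM x - sigmaM y := by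
  ext i j
  fin_cases i <;> fin_cases j <;> simp [sigmaM] <;> ring

theorem sigmaM_smul (c : ℂ) (x : Fin 3 → ℂ) : sigmaM (c • x) = c • sigmaM x := by
  ext i j
  fin_cases i <;> fin_cases j <;> simp [sigmaM]

theorem sigmaM_mulVec (w x : Fin 3 → ℂ) : sigmaM w *ᵥ x = w ⨯₃ x := by
  ext i
  fin_cases i <;> simp [sigmaM, cross_apply, mulVec, vecHead, vecTail] <;> ring

theorem vecMulVec_sub_vecMulVec (x y : Fin 3 → ℂ) :
    vecMulVec x y - vecMulVec y x = sigmaM (y ⨯₃ x) := by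
  ext i j
  fin_cases i <;> fin_cases j <;> simp [sigmaM, cross_apply, vecMulVec_apply] <;> ring

theorem sub_transpose_eq_sigmaM_axialVector (A : Matrix (Fin 3) (Fin 3) ℂ) :
    A - Aᵀ = sigmaM (axialVector A) := by
  ext i j
  fin_cases i <;> fin_cases j <;> simp [sigmaM, axialVector]

theorem trace_sigmaM_mul (w : Fin 3 → ℂ) (A : Matrix (Fin 3) (Fin 3) ℂ) :
    (sigmaM w * A).trace = -(w ⬝ᵥ axialVector A) := by
  simp [sigmaM, axialVector, trace_fin_three, vecMul, vecHead, vecTail]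
  ring

theorem vecMul_sub_mulVec_eq_cross_axialVector (v : Fin 3 → ℂ) (A : Matrix (Fin 3) (Fin 3) ℂ) :
    v ᵥ* A - A *ᵥ v = v ⨯₃ axialVector A := by
  rw [← mulVec_transpose, ← sub_mulVec, ← neg_sub, neg_mulVec,
    sub_transpose_eq_sigmaM_axialVector, sigmaM_mulVec, cross_anticomm]

theorem tauM_mul_add_mul_tauM (u v : Fin 3 → ℂ) (X : Matrix (Fin 3) (Fin 3) ℂ) :
    tauM u v * X + X * tauM v u
      = vecMulVec u (v ᵥ* X) + vecMulVec (X *ᵥ v) u - (u ⬝ᵥ v) • X := by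
  simp only [tauM, sub_mul, mul_sub, vecMulVec_mul, mul_vecMulVec, Matrix.smul_mul,
    Matrix.mul_smul, Matrix.one_mul, Matrix.mul_one, dotProduct_comm v u]
  rw [sub_add_sub_comm, ← add_smul]
  congr 2
  ring

theorem stmt7 (u v : Fin 3 → ℂ) (X : Matrix (Fin 3) (Fin 3) ℂ) :
    tauM u v * X + X * tauM v u - (tauM u v * X + X * tauM v u)ᵀ
      = (sigmaM u * X).trace • sigmaM v := by
  set w := axialVector X
  calc _ = (vecMulVec u (v ᵥ* X) - vecMulVec (v ᵥ* X) u)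
          - (vecMulVec u (X *ᵥ v) - vecMulVec (X *ᵥ v) u) - (u ⬝ᵥ v) • (X - Xᵀ) := by
        simp only [tauM_mul_add_mul_tauM, transpose_add, transpose_sub, transpose_smul,
          transpose_vecMulVec, smul_sub]
        abel
    _ = sigmaM ((v ᵥ* X - X *ᵥ v) ⨯₃ u - (u ⬝ᵥ v) • w) := by
        rw [vecMulVec_sub_vecMulVec, vecMulVec_sub_vecMulVec, sub_transpose_eq_sigmaM_axialVector,
          ← sigmaM_smul, ← sigmaM_sub, ← sigmaM_sub, map_sub, LinearMap.sub_apply]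
    _ = sigmaM (-(u ⬝ᵥ w) • v) := by
        rw [vecMul_sub_mulVec_eq_cross_axialVector, cross_cross_eq_smul_sub_smul,
          dotProduct_comm v u, dotProduct_comm w u, sub_sub_cancel_left, neg_smul]
    _ = _ := by rw [sigmaM_smul, trace_sigmaM_mul]
end

section
/- Let A, B ∈ Mₙ(ℂ) with n ≥ 2, tr(A) = tr(B), and suppose the linear map Φ(X) = AX + XB on Mₙ(ℂ) satisfies Φ(X) = tr(EX)·F for some fixed E, F ∈ Mₙ(ℂ) and all X. Then A = B = 0. -/
/-!
Apply the Sylvester operator `Φ X = A * X + X * B` to the matrix units `single i j 1`: the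
`(k, l)` entry of the image is `[j = l] A k i + [i = k] B j l`. Since every image is a multiple of
the one matrix `F`, all `2 × 2` minors `Φ(X) k l * Φ(Y) k' l' - Φ(X) k' l' * Φ(Y) k l` vanish.
Well-chosen minors show that the squares of the off-diagonal entries of `A` and `B` vanish, and
then that `(A i i + B j j)²` vanishes. So `A = a • 1` and `B = -a • 1`, and the trace condition
forces `a = 0`.
-/

open Matrix

namespace Matrix

variable {ι R : Type*} [Fintype ι] [DecidableEq ι] [CommRing R]

theorem mul_single_add_single_mul_apply (A B : Matrix ι ι R) (i j k l : ι) :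
    (A * single i j 1 + single i j 1 * B : Matrix ι ι R) k l =
      (if j = l then A k i else 0) + (if i = k then B j l else 0) := by
  simp [mul_apply, single_apply, ite_and]

theorem apply_mul_apply_comm_of_forall_exists_smul {α m n : Type*} {f : α → Matrix m n R}
    {F : Matrix m n R} (hf : ∀ x, ∃ c : R, f x = c • F) (x y : α) (k k' : m) (l l' : n) :
    f x k l * f y k' l' = f x k' l' * f y k l := by
  obtain ⟨c, hc⟩ := hf x
  obtain ⟨d, hd⟩ := hf y
  simp only [hc, hd, smul_apply, smul_eq_mul]
  ring

section RankOne

variable {A B F : Matrix ι ι R} (hΦ : ∀ X, ∃ c : R, A * X + X * B = c • F)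
include hΦ

theorem sylvester_single_minor (i j i' j' k l k' l' : ι) :
    ((if j = l then A k i else 0) + (if i = k then B j l else 0)) *
        ((if j' = l' then A k' i' else 0) + (if i' = k' then B j' l' else 0)) =
      ((if j = l' then A k' i else 0) + (if i = k' then B j l' else 0)) *
        ((if j' = l then A k i' else 0) + (if i' = k then B j' l else 0)) := by
  have := apply_mul_apply_comm_of_forall_exists_smul hΦ (single i j 1) (single i' j' 1) k k' l l'
  simpa only [mul_single_add_single_mul_apply] using this

variable [NoZeroDivisors R] [Nontrivial ι]

theorem sylvester_left_offDiag_eq_zero {i k : ι} (hik : i ≠ k) : A k i = 0 := by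
  obtain ⟨j, j', hjj'⟩ := exists_pair_ne ι
  have := sylvester_single_minor hΦ i j i j' k j k j'
  simp only [hik, hjj', hjj'.symm, if_true, if_false, add_zero] at this
  exact mul_self_eq_zero.mp (by simpa using this)

theorem sylvester_right_offDiag_eq_zero {j l : ι} (hjl : j ≠ l) : B j l = 0 := by
  obtain ⟨i, i', hii'⟩ := exists_pair_ne ι
  have := sylvester_single_minor hΦ i j i' j i l i' l
  simp only [hjl, hii', hii'.symm, if_true, if_false, zero_add] at this
  exact mul_self_eq_zero.mp (by simpa using this)

theorem sylvester_left_diag_add_right_diag_eq_zero (i j : ι) : A i i + B j j = 0 := by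
  obtain ⟨i', hi'⟩ := exists_ne i
  obtain ⟨j', hj'⟩ := exists_ne j
  have h₁ : (A i i + B j j) * (A i i + B j' j') = 0 := by
    simpa [hj', hj'.symm, sylvester_right_offDiag_eq_zero hΦ hj'.symm]
      using sylvester_single_minor hΦ i j i j' i j i j'
  have h₂ : (A i i + B j j) * (A i' i' + B j j) = 0 := by
    simpa [hi', hi'.symm, sylvester_left_offDiag_eq_zero hΦ hi'.symm]
      using sylvester_single_minor hΦ i j i' j i j i' j
  have h₃ : (A i i + B j j) * (A i' i' + B j' j') = 0 := by
    simpa [hi', hi'.symm, hj', hj'.symm] using sylvester_single_minor hΦ i j i' j' i j i' j'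
  exact mul_self_eq_zero.mp (by linear_combination h₁ + h₂ - h₃)

end RankOne

omit [DecidableEq ι] in
theorem diag_eq_zero_of_forall_add_eq_zero [NoZeroDivisors R] [CharZero R] {A B : Matrix ι ι R}
    (hAB : ∀ i j, A i i + B j j = 0) (htr : A.trace = B.trace) (i : ι) :
    A i i = 0 ∧ B i i = 0 := by
  have htr₀ : A.trace + B.trace = 0 := by
    simpa [trace, ← Finset.sum_add_distrib] using Finset.sum_eq_zero fun j _ => hAB j j
  have hB : B.trace = 0 := by
    simpa using (mul_eq_zero.mp (by linear_combination htr₀ - htr : (2 : R) * B.trace = 0))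
  have hA : (Fintype.card ι : R) * A i i + B.trace = 0 := by
    rw [← Finset.sum_eq_zero fun j (_ : j ∈ Finset.univ) => hAB i j, Finset.sum_add_distrib]
    simp [trace]
  have hcard : (Fintype.card ι : R) ≠ 0 :=
    Nat.cast_ne_zero.mpr (Fintype.card_pos_iff.mpr ⟨i⟩).ne'
  have hAi : A i i = 0 := (mul_eq_zero.mp (by simpa [hB] using hA)).resolve_left hcard
  exact ⟨hAi, by simpa [hAi] using hAB i i⟩

theorem sylvester_eq_zero_of_forall_exists_smul [NoZeroDivisors R] [CharZero R] [Nontrivial ι]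
    {A B F : Matrix ι ι R} (htr : A.trace = B.trace)
    (hΦ : ∀ X, ∃ c : R, A * X + X * B = c • F) : A = 0 ∧ B = 0 := by
  have hdiag :=
    diag_eq_zero_of_forall_add_eq_zero (sylvester_left_diag_add_right_diag_eq_zero hΦ) htr
  refine ⟨ext fun k l => ?_, ext fun k l => ?_⟩
  · rcases eq_or_ne l k with rfl | hlk
    exacts [(hdiag l).1, sylvester_left_offDiag_eq_zero hΦ hlk]
  · rcases eq_or_ne k l with rfl | hkl
    exacts [(hdiag k).2, sylvester_right_offDiag_eq_zero hΦ hkl]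

end Matrix

theorem stmt8 (n : ℕ) (hn : 2 ≤ n) (A B E F : Matrix (Fin n) (Fin n) ℂ)
    (htr : A.trace = B.trace)
    (h : ∀ X : Matrix (Fin n) (Fin n) ℂ, A * X + X * B = (E * X).trace • F) :
    A = 0 ∧ B = 0 :=
  have : Nontrivial (Fin n) := Fin.nontrivial_iff_two_le.mpr hn
  sylvester_eq_zero_of_forall_exists_smul htr fun X => ⟨_, h X⟩
end

section
/- Let n ≥ 4 and A, B, C, D ∈ Mₙ(ℂ) with tr(A) = tr(B), tr(C) = tr(D). If the map Φ(X) = AX + XB + (CX + XD)ᵀ on Mₙ(ℂ) equals X ↦ tr(EX)·F for some fixed E, F ∈ Mₙ(ℂ), then A = B = C = D = 0. -/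
/-!
Evaluating both sides at a matrix unit `single k l 1` gives, for all indices,
`[l = q] A p k + [k = p] B l q + [l = p] C q k + [k = q] D l p = E l k * F p q`.
The right-hand side is a product of an entry of `E` and an entry of `F`, so whenever
`x * y = e = z * w` while the crossed product `x * w` vanishes, `e ^ 2 = 0`. Since `n ≥ 4`
there are always two spare indices away from those in play; this kills the off-diagonal
entries of `A` and forces `A k k + B l l = 0` for `k ≠ l`, so the diagonals of `A` and `B`
are constant and opposite, and `tr A = tr B` makes them vanish. The symmetries
`X ↦ Φ(X)ᵀ`, which swaps `(A, B)` with `(C, D)`, and `X ↦ Φ(Xᵀ)ᵀ`, which swaps `A` with `Bᵀ`,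
reduce everything to statements about `A`.
-/

open Matrix

lemma Fintype.exists_ne_ne_ne_of_four_le_card {α : Type*} [Fintype α] (h : 4 ≤ Fintype.card α)
    (x y z : α) : ∃ w, w ≠ x ∧ w ≠ y ∧ w ≠ z := by
  have hlen : (([x, y, z].length : ℕ) : Cardinal) < Cardinal.mk α := by
    rw [Cardinal.mk_fintype]; exact_mod_cast h
  simpa [not_or] using Cardinal.exists_notMem_of_length_lt [x, y, z] hlen

lemma eq_zero_of_mul_eq_of_mul_eq {M : Type*} [CommMonoidWithZero M] [NoZeroDivisors M]
    {a b c d e : M} (hab : a * b = e) (hcd : c * d = e) (had : a * d = 0) : e = 0 := by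
  have : e * e = a * d * (c * b) :=
    calc e * e = a * b * (c * d) := by rw [hab, hcd]
      _ = a * d * (c * b) := by ac_rfl
  rwa [had, zero_mul, mul_self_eq_zero] at this

variable {ι R : Type*} [Fintype ι] [CommRing R]

lemma Matrix.diag_eq_zero_of_diag_add_diag_eq_zero [NoZeroDivisors R] [CharZero R]
    {A B : Matrix ι ι R} (hcard : 3 ≤ Fintype.card ι)
    (hAB : ∀ k l, k ≠ l → A k k + B l l = 0) (htr : A.trace = B.trace) (k : ι) :
    A k k = 0 ∧ B k k = 0 := by
  have hfresh : ∀ i j : ι, ∃ m, m ≠ i ∧ m ≠ j :=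
    Cardinal.exists_ne_ne_of_three_le (by rw [Cardinal.mk_fintype]; exact_mod_cast hcard)
  have hA (i : ι) : A i i = A k k := by
    obtain ⟨m, hmi, hmk⟩ := hfresh i k
    linear_combination hAB i m hmi.symm - hAB k m hmk.symm
  have hB (j : ι) : B j j = B k k := by
    obtain ⟨m, hmj, hmk⟩ := hfresh j k
    linear_combination hAB m j hmj - hAB m k hmk
  obtain ⟨l, hlk, -⟩ := hfresh k k
  have hsum : A k k + B k k = 0 := hB l ▸ hAB k l hlk.symm
  have htr' : (Fintype.card ι : R) * A k k = Fintype.card ι * B k k := by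
    simpa [trace, hA, hB] using htr
  have hcard0 : (2 * Fintype.card ι : R) ≠ 0 := by
    have : Fintype.card ι ≠ 0 := by omega
    exact_mod_cast mul_ne_zero two_ne_zero this
  have hAkk : A k k = 0 := by
    refine (mul_eq_zero.mp ?_).resolve_left hcard0
    linear_combination htr' + Fintype.card ι * hsum
  exact ⟨hAkk, by linear_combination hsum - hAkk⟩

namespace Matrix

def phi (A B C D X : Matrix ι ι R) : Matrix ι ι R := A * X + X * B + (C * X + X * D)ᵀ

lemma transpose_phi (A B C D X : Matrix ι ι R) : (phi A B C D X)ᵀ = phi C D A B X := by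
  simp only [phi, transpose_add, transpose_transpose]
  abel

lemma transpose_phi_transpose (A B C D X : Matrix ι ι R) :
    (phi A B C D Xᵀ)ᵀ = phi Bᵀ Aᵀ Dᵀ Cᵀ X := by
  simp only [phi, transpose_add, transpose_mul, transpose_transpose]
  abel

def PhiEqTraceSMul (A B C D E F : Matrix ι ι R) : Prop :=
  ∀ X, phi A B C D X = (E * X).trace • F

namespace PhiEqTraceSMul

variable {A B C D E F : Matrix ι ι R}

lemma symm (h : PhiEqTraceSMul A B C D E F) : PhiEqTraceSMul C D A B E Fᵀ := fun X => by
  rw [← transpose_phi, h X, transpose_smul]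

lemma transpose (h : PhiEqTraceSMul A B C D E F) : PhiEqTraceSMul Bᵀ Aᵀ Dᵀ Cᵀ Eᵀ Fᵀ := fun X => by
  rw [← transpose_phi_transpose, h Xᵀ, transpose_smul, ← trace_transpose, transpose_mul,
    transpose_transpose, trace_mul_comm]

variable [DecidableEq ι]

lemma entry_single (h : PhiEqTraceSMul A B C D E F) (k l p q : ι) :
    ((if l = q then A p k else 0) + (if k = p then B l q else 0)) +
      ((if l = p then C q k else 0) + (if k = q then D l p else 0)) = E l k * F p q := by
  have := congrFun₂ (h (single k l 1)) p q
  simpa [phi, mul_apply, single_apply, ite_and, trace_mul_single] using this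

variable [NoZeroDivisors R]

lemma left_apply_eq_zero_of_ne (h : PhiEqTraceSMul A B C D E F) (hcard : 4 ≤ Fintype.card ι)
    {p k : ι} (hpk : p ≠ k) : A p k = 0 := by
  obtain ⟨j₁, hj₁p, hj₁k, -⟩ := Fintype.exists_ne_ne_ne_of_four_le_card hcard p k p
  obtain ⟨j₂, hj₂p, hj₂k, hj₂j₁⟩ := Fintype.exists_ne_ne_ne_of_four_le_card hcard p k j₁
  have h₁ : E j₁ k * F p j₁ = A p k := by
    simpa [hpk.symm, hj₁p, hj₁k.symm] using (h.entry_single k j₁ p j₁).symm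
  have h₂ : E j₂ k * F p j₂ = A p k := by
    simpa [hpk.symm, hj₂p, hj₂k.symm] using (h.entry_single k j₂ p j₂).symm
  have h₁₂ : E j₁ k * F p j₂ = 0 := by
    simpa [hpk.symm, hj₁p, hj₂j₁.symm, hj₂k.symm] using (h.entry_single k j₁ p j₂).symm
  exact eq_zero_of_mul_eq_of_mul_eq h₁ h₂ h₁₂

lemma right_apply_eq_zero_of_ne (h : PhiEqTraceSMul A B C D E F) (hcard : 4 ≤ Fintype.card ι)
    {p k : ι} (hpk : p ≠ k) : B p k = 0 :=
  h.transpose.left_apply_eq_zero_of_ne hcard hpk.symm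

lemma left_diag_add_right_diag_eq_zero (h : PhiEqTraceSMul A B C D E F)
    (hcard : 4 ≤ Fintype.card ι) {k l : ι} (hkl : k ≠ l) : A k k + B l l = 0 := by
  have diag {i j : ι} (hij : i ≠ j) : E j i * F i j = A i i + B j j := by
    simpa [hij, hij.symm] using (h.entry_single i j i j).symm
  -- With `d i j := A i i + B j j` we have `d k l = d k m₂ + d m₁ l - d m₁ m₂`; if `d k l ≠ 0`
  -- then `E l k ≠ 0`, and the vanishing off-diagonal entries kill the three `F`-entries
  -- that `diag` attaches to the right-hand side.
  by_contra hne
  have hE : E l k ≠ 0 := left_ne_zero_of_mul (diag hkl ▸ hne)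
  obtain ⟨m₁, hm₁k, hm₁l, -⟩ := Fintype.exists_ne_ne_ne_of_four_le_card hcard k l k
  obtain ⟨m₂, hm₂k, hm₂l, hm₂m₁⟩ := Fintype.exists_ne_ne_ne_of_four_le_card hcard k l m₁
  have hF₁ : F m₁ l = 0 := by
    have : E l k * F m₁ l = A m₁ k := by
      simpa [hm₁k.symm, hm₁l.symm, hkl] using (h.entry_single k l m₁ l).symm
    rw [h.left_apply_eq_zero_of_ne hcard hm₁k] at this
    exact (mul_eq_zero.mp this).resolve_left hE
  have hF₂ : F k m₂ = 0 := by
    have : E l k * F k m₂ = B l m₂ := by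
      simpa [hm₂l.symm, hkl.symm, hm₂k.symm] using (h.entry_single k l k m₂).symm
    rw [h.right_apply_eq_zero_of_ne hcard hm₂l.symm] at this
    exact (mul_eq_zero.mp this).resolve_left hE
  have hF₁₂ : F m₁ m₂ = 0 := by
    have : E l k * F m₁ m₂ = 0 := by
      simpa [hm₂l.symm, hm₁k.symm, hm₁l.symm, hm₂k.symm] using (h.entry_single k l m₁ m₂).symm
    exact (mul_eq_zero.mp this).resolve_left hE
  have h₂ := diag hm₂k.symm
  have h₁ := diag hm₁l
  have h₁₂ := diag hm₂m₁.symm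
  rw [hF₂, mul_zero] at h₂
  rw [hF₁, mul_zero] at h₁
  rw [hF₁₂, mul_zero] at h₁₂
  exact hne (by linear_combination -h₂ - h₁ + h₁₂)

lemma left_eq_zero_and_right_eq_zero [CharZero R] (h : PhiEqTraceSMul A B C D E F)
    (hcard : 4 ≤ Fintype.card ι) (htr : A.trace = B.trace) : A = 0 ∧ B = 0 := by
  have hdiag := diag_eq_zero_of_diag_add_diag_eq_zero (by omega)
    (fun _ _ hkl => h.left_diag_add_right_diag_eq_zero hcard hkl) htr
  constructor <;> ext i j <;> rcases eq_or_ne i j with rfl | hij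
  · exact (hdiag i).1
  · exact h.left_apply_eq_zero_of_ne hcard hij
  · exact (hdiag i).2
  · exact h.right_apply_eq_zero_of_ne hcard hij

end PhiEqTraceSMul

end Matrix

theorem stmt9 (n : ℕ) (hn : 4 ≤ n) (A B C D E F : Matrix (Fin n) (Fin n) ℂ)
    (htrAB : A.trace = B.trace) (htrCD : C.trace = D.trace)
    (h : ∀ X : Matrix (Fin n) (Fin n) ℂ,
      A * X + X * B + (C * X + X * D)ᵀ = (E * X).trace • F) :
    A = 0 ∧ B = 0 ∧ C = 0 ∧ D = 0 := by
  have hΦ : PhiEqTraceSMul A B C D E F := h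
  have hcard : 4 ≤ Fintype.card (Fin n) := by simpa using hn
  obtain ⟨hA, hB⟩ := hΦ.left_eq_zero_and_right_eq_zero hcard htrAB
  obtain ⟨hC, hD⟩ := hΦ.symm.left_eq_zero_and_right_eq_zero hcard htrCD
  exact ⟨hA, hB, hC, hD⟩
end

section
/- Let A, B, C, D ∈ M₂(ℂ) with tr(A)=tr(B), tr(C)=tr(D), and suppose AX + XB + J(CX + XD)ᵀJᵀ = tr(EX)·F for some fixed E, F ∈ M₂(ℂ) and all X ∈ M₂(ℂ). Then either (C = A, D = B, and E⊗F can be taken as (A+B)⊗I₂) or (C = JBᵀJᵀ, D = JAᵀJᵀ, and E⊗F can be taken as I₂⊗(A+B)). -/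
open Matrix

attribute [local simp] Matrix.mul_apply Matrix.vecMul dotProduct Fin.sum_univ_two
  Matrix.trace_fin_two Matrix.one_apply Matrix.transpose_apply Matrix.vecHead Matrix.vecTail

lemma lem1 (A B X : Matrix (Fin 2) (Fin 2) ℂ) :
    A * X + X * B + !![0, 1; -1, 0] * (A * X + X * B)ᵀ * (!![0, 1; -1, 0] : Matrix (Fin 2) (Fin 2) ℂ)ᵀ
      = ((A + B) * X).trace • (1 : Matrix (Fin 2) (Fin 2) ℂ) := by
  ext i j
  fin_cases i <;> fin_cases j <;> simp <;> ring

lemma lem2 (A B X : Matrix (Fin 2) (Fin 2) ℂ) :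
    A * X + X * B + !![0, 1; -1, 0] *
      ((!![0, 1; -1, 0] * Bᵀ * (!![0, 1; -1, 0] : Matrix (Fin 2) (Fin 2) ℂ)ᵀ) * X +
        X * (!![0, 1; -1, 0] * Aᵀ * (!![0, 1; -1, 0] : Matrix (Fin 2) (Fin 2) ℂ)ᵀ))ᵀ *
      (!![0, 1; -1, 0] : Matrix (Fin 2) (Fin 2) ℂ)ᵀ
      = (((1 : Matrix (Fin 2) (Fin 2) ℂ)) * X).trace • (A + B) := by
  ext i j
  fin_cases i <;> fin_cases j <;> simp <;> ring

lemma lemJ (B : Matrix (Fin 2) (Fin 2) ℂ) :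
    !![0, 1; -1, 0] * Bᵀ * (!![0, 1; -1, 0] : Matrix (Fin 2) (Fin 2) ℂ)ᵀ
      = !![B 1 1, -(B 0 1); -(B 1 0), B 0 0] := by
  ext i j
  fin_cases i <;> fin_cases j <;> simp <;> ring

lemma key (a1 a2 a3 a4 b1 b2 b3 b4 c1 c2 c3 c4 d1 d2 d3 d4 e1 e2 e3 e4 f1 f2 f3 f4 : ℂ)
    (hT1 : a1 + a4 = b1 + b4) (hT2 : c1 + c4 = d1 + d4)
    (h1a : a1 + b1 = e1 * f1) (h1b : b2 - d2 = e1 * f2)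
    (h1c : a3 - c3 = e1 * f3) (h1d : c1 + d1 = e1 * f4)
    (h2a : b3 + c3 = e2 * f1) (h2b : a1 + b4 - c1 - d4 = e2 * f2)
    (h2c : (0:ℂ) = e2 * f3) (h2d : a3 + d3 = e2 * f4)
    (h3a : a2 + d2 = e3 * f1) (h3b : (0:ℂ) = e3 * f2)
    (h3c : a4 + b1 - c4 - d1 = e3 * f3) (h3d : b2 + c2 = e3 * f4)
    (h4a : c4 + d4 = e4 * f1) (h4b : a2 - c2 = e4 * f2)
    (h4c : b3 - d3 = e4 * f3) (h4d : a4 + b4 = e4 * f4) :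
    (c1 = a1 ∧ c2 = a2 ∧ c3 = a3 ∧ c4 = a4 ∧ d1 = b1 ∧ d2 = b2 ∧ d3 = b3 ∧ d4 = b4) ∨
    (c1 = b4 ∧ c2 = -b2 ∧ c3 = -b3 ∧ c4 = b1 ∧ d1 = a4 ∧ d2 = -a2 ∧ d3 = -a3 ∧ d4 = a1) := by
  by_cases he2 : e2 = 0 <;> by_cases he3 : e3 = 0
  · -- e2 = 0, e3 = 0
    have g2a : b3 + c3 = 0 := by linear_combination h2a + f1 * he2
    have g2b : a1 + b4 - c1 - d4 = 0 := by linear_combination h2b + f2 * he2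
    have g2d : a3 + d3 = 0 := by linear_combination h2d + f4 * he2
    have g3a : a2 + d2 = 0 := by linear_combination h3a + f1 * he3
    have g3c : a4 + b1 - c4 - d1 = 0 := by linear_combination h3c + f3 * he3
    have g3d : b2 + c2 = 0 := by linear_combination h3d + f4 * he3
    by_cases he14 : e1 = e4
    · right
      have hab : a1 + b1 - c4 - d4 = 0 := by linear_combination h1a - h4a + f1 * he14
      have hc1 : c1 = b4 := by
        linear_combination (-3/4 : ℂ) * g2b - (1/4 : ℂ) * g3c + (1/4 : ℂ) * hT1 +
          (1/4 : ℂ) * hT2 + (1/2 : ℂ) * hab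
      have hd4 : d4 = a1 := by linear_combination -g2b - hc1
      have hc4 : c4 = b1 := by linear_combination -hab - hd4
      have hd1 : d1 = a4 := by linear_combination -g3c - hc4
      exact ⟨hc1, by linear_combination g3d, by linear_combination g2a, hc4, hd1,
        by linear_combination g3a, by linear_combination g2d, hd4⟩
    · left
      have hne : e1 - e4 ≠ 0 := sub_ne_zero_of_ne he14
      have hf2 : f2 = 0 := by
        have hz : (e1 - e4) * f2 = 0 := by linear_combination h4b - h1b - g3a + g3d
        exact (mul_eq_zero.mp hz).resolve_left hne
      have hf3 : f3 = 0 := by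
        have hz : (e1 - e4) * f3 = 0 := by linear_combination h4c - h1c - g2a + g2d
        exact (mul_eq_zero.mp hz).resolve_left hne
      have hf14 : f1 = f4 := by
        have hz : (e1 - e4) * (f1 - f4) = 0 := by
          linear_combination -h1a + h1d + h4a - h4d + g2b + g3c
        have h0 := (mul_eq_zero.mp hz).resolve_left hne
        linear_combination h0
      have h5 : a1 + b1 - c1 - d1 = 0 := by linear_combination h1a - h1d + e1 * hf14
      have h6 : a4 + b4 - c4 - d4 = 0 := by linear_combination h4d - h4a - e4 * hf14
      have hx : c1 = a1 := by
        linear_combination (1/2 : ℂ) * g3c - (1/4 : ℂ) * hT1 + (1/4 : ℂ) * hT2 -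
          (3/4 : ℂ) * h5 - (1/4 : ℂ) * h6
      have hd1 : d1 = b1 := by linear_combination -h5 - hx
      have hc4 : c4 = a4 := by linear_combination -g3c - hd1
      have hd4 : d4 = b4 := by linear_combination -h6 - hc4
      exact ⟨hx, by linear_combination -h4b - e4 * hf2, by linear_combination -h1c - e1 * hf3,
        hc4, hd1, by linear_combination -h1b - e1 * hf2, by linear_combination -h4c - e4 * hf3, hd4⟩
  · -- e2 = 0, e3 ≠ 0
    left
    have hf2 : f2 = 0 := (mul_eq_zero.mp h3b.symm).resolve_left he3
    have hc2 : c2 = a2 := by linear_combination -h4b - e4 * hf2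
    have hd2 : d2 = b2 := by linear_combination -h1b - e1 * hf2
    have hA : a1 + b4 - c1 - d4 = 0 := by linear_combination h2b + f2 * he2
    have hf14 : f1 = f4 := by
      have hz : e3 * (f1 - f4) = 0 := by linear_combination -h3a + h3d - hc2 + hd2
      have h0 := (mul_eq_zero.mp hz).resolve_left he3
      linear_combination h0
    have h5 : a1 + b1 - c1 - d1 = 0 := by linear_combination h1a - h1d + e1 * hf14
    have h6 : a4 + b4 - c4 - d4 = 0 := by linear_combination h4d - h4a - e4 * hf14
    have hx : c1 = a1 := by
      linear_combination (-1/2 : ℂ) * hA - (1/4 : ℂ) * hT1 + (1/4 : ℂ) * hT2 -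
        (1/4 : ℂ) * h5 + (1/4 : ℂ) * h6
    have hd1 : d1 = b1 := by linear_combination -h5 - hx
    have hd4 : d4 = b4 := by linear_combination -hA - hx
    have hc4 : c4 = a4 := by linear_combination -h6 - hd4
    have hf3 : f3 = 0 := by
      have hz : e3 * f3 = 0 := by linear_combination -h3c - hc4 - hd1
      exact (mul_eq_zero.mp hz).resolve_left he3
    exact ⟨hx, hc2, by linear_combination -h1c - e1 * hf3, hc4, hd1, hd2,
      by linear_combination -h4c - e4 * hf3, hd4⟩
  · -- e2 ≠ 0, e3 = 0
    left
    have hf3 : f3 = 0 := (mul_eq_zero.mp h2c.symm).resolve_left he2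
    have hc3 : c3 = a3 := by linear_combination -h1c - e1 * hf3
    have hd3 : d3 = b3 := by linear_combination -h4c - e4 * hf3
    have hB : a4 + b1 - c4 - d1 = 0 := by linear_combination h3c + f3 * he3
    have hf14 : f1 = f4 := by
      have hz : e2 * (f1 - f4) = 0 := by linear_combination -h2a + h2d + hc3 - hd3
      have h0 := (mul_eq_zero.mp hz).resolve_left he2
      linear_combination h0
    have h5 : a1 + b1 - c1 - d1 = 0 := by linear_combination h1a - h1d + e1 * hf14
    have h6 : a4 + b4 - c4 - d4 = 0 := by linear_combination h4d - h4a - e4 * hf14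
    have hx : c1 = a1 := by
      linear_combination (1/2 : ℂ) * hB - (1/4 : ℂ) * hT1 + (1/4 : ℂ) * hT2 -
        (3/4 : ℂ) * h5 - (1/4 : ℂ) * h6
    have hd1 : d1 = b1 := by linear_combination -h5 - hx
    have hc4 : c4 = a4 := by linear_combination -hB - hd1
    have hd4 : d4 = b4 := by linear_combination -h6 - hc4
    have hf2 : f2 = 0 := by
      have hz : e2 * f2 = 0 := by linear_combination -h2b - hx - hd4
      exact (mul_eq_zero.mp hz).resolve_left he2
    exact ⟨hx, by linear_combination -h4b - e4 * hf2, hc3, hc4, hd1,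
      by linear_combination -h1b - e1 * hf2, hd3, hd4⟩
  · -- e2 ≠ 0, e3 ≠ 0
    left
    have hf3 : f3 = 0 := (mul_eq_zero.mp h2c.symm).resolve_left he2
    have hf2 : f2 = 0 := (mul_eq_zero.mp h3b.symm).resolve_left he3
    have hc3 : c3 = a3 := by linear_combination -h1c - e1 * hf3
    have hd3 : d3 = b3 := by linear_combination -h4c - e4 * hf3
    have hc2 : c2 = a2 := by linear_combination -h4b - e4 * hf2
    have hd2 : d2 = b2 := by linear_combination -h1b - e1 * hf2
    have hA : a1 + b4 - c1 - d4 = 0 := by linear_combination h2b + e2 * hf2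
    have hB : a4 + b1 - c4 - d1 = 0 := by linear_combination h3c + e3 * hf3
    have h5 : a1 + b1 - c1 - d1 = 0 := by
      have hz : e2 * (a1 + b1 - c1 - d1) = 0 := by
        linear_combination e2 * h1a - e1 * h2a - e2 * h1d + e1 * h2d + e1 * hc3 - e1 * hd3
      exact (mul_eq_zero.mp hz).resolve_left he2
    have hx : c1 = a1 := by
      linear_combination (-1/4 : ℂ) * hA + (1/4 : ℂ) * hB - (1/4 : ℂ) * hT1 +
        (1/4 : ℂ) * hT2 - (1/2 : ℂ) * h5
    have hd1 : d1 = b1 := by linear_combination -h5 - hx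
    have hd4 : d4 = b4 := by linear_combination -hA - hx
    have hc4 : c4 = a4 := by linear_combination -hB - hd1
    exact ⟨hx, hc2, hc3, hc4, hd1, hd2, hd3, hd4⟩


set_option maxHeartbeats 1000000 in
theorem stmt10 (A B C D E F : Matrix (Fin 2) (Fin 2) ℂ)
    (htrAB : A.trace = B.trace) (htrCD : C.trace = D.trace)
    (h : ∀ X : Matrix (Fin 2) (Fin 2) ℂ,
      A * X + X * B + !![0, 1; -1, 0] * (C * X + X * D)ᵀ * (!![0, 1; -1, 0] : Matrix (Fin 2) (Fin 2) ℂ)ᵀ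
        = (E * X).trace • F) :
    (C = A ∧ D = B ∧
      ∀ X : Matrix (Fin 2) (Fin 2) ℂ,
        (E * X).trace • F = ((A + B) * X).trace • (1 : Matrix (Fin 2) (Fin 2) ℂ)) ∨
    (C = !![0, 1; -1, 0] * Bᵀ * (!![0, 1; -1, 0] : Matrix (Fin 2) (Fin 2) ℂ)ᵀ ∧
     D = !![0, 1; -1, 0] * Aᵀ * (!![0, 1; -1, 0] : Matrix (Fin 2) (Fin 2) ℂ)ᵀ ∧
      ∀ X : Matrix (Fin 2) (Fin 2) ℂ,
        (E * X).trace • F = (((1 : Matrix (Fin 2) (Fin 2) ℂ)) * X).trace • (A + B)) := by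
  have H1 := h !![(1:ℂ), 0; 0, 0]
  have H2 := h !![(0:ℂ), 1; 0, 0]
  have H3 := h !![(0:ℂ), 0; 1, 0]
  have H4 := h !![(0:ℂ), 0; 0, 1]
  have h1a := congr_fun (congr_fun H1 0) 0
  have h1b := congr_fun (congr_fun H1 0) 1
  have h1c := congr_fun (congr_fun H1 1) 0
  have h1d := congr_fun (congr_fun H1 1) 1
  have h2a := congr_fun (congr_fun H2 0) 0
  have h2b := congr_fun (congr_fun H2 0) 1
  have h2c := congr_fun (congr_fun H2 1) 0
  have h2d := congr_fun (congr_fun H2 1) 1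
  have h3a := congr_fun (congr_fun H3 0) 0
  have h3b := congr_fun (congr_fun H3 0) 1
  have h3c := congr_fun (congr_fun H3 1) 0
  have h3d := congr_fun (congr_fun H3 1) 1
  have h4a := congr_fun (congr_fun H4 0) 0
  have h4b := congr_fun (congr_fun H4 0) 1
  have h4c := congr_fun (congr_fun H4 1) 0
  have h4d := congr_fun (congr_fun H4 1) 1
  simp [Matrix.mul_apply, Matrix.vecMul, dotProduct, Fin.sum_univ_two,
    Matrix.trace_fin_two, Matrix.one_apply, Matrix.transpose_apply, Matrix.vecHead,
    Matrix.vecTail] at h1a h1b h1c h1d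
  simp [Matrix.mul_apply, Matrix.vecMul, dotProduct, Fin.sum_univ_two,
    Matrix.trace_fin_two, Matrix.one_apply, Matrix.transpose_apply, Matrix.vecHead,
    Matrix.vecTail] at h2a h2b h2c h2d
  simp [Matrix.mul_apply, Matrix.vecMul, dotProduct, Fin.sum_univ_two,
    Matrix.trace_fin_two, Matrix.one_apply, Matrix.transpose_apply, Matrix.vecHead,
    Matrix.vecTail] at h3a h3b h3c h3d
  simp [Matrix.mul_apply, Matrix.vecMul, dotProduct, Fin.sum_univ_two,
    Matrix.trace_fin_two, Matrix.one_apply, Matrix.transpose_apply, Matrix.vecHead,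
    Matrix.vecTail] at h4a h4b h4c h4d
  rw [Matrix.trace_fin_two, Matrix.trace_fin_two] at htrAB htrCD
  have hkey := key (A 0 0) (A 0 1) (A 1 0) (A 1 1) (B 0 0) (B 0 1) (B 1 0) (B 1 1)
    (C 0 0) (C 0 1) (C 1 0) (C 1 1) (D 0 0) (D 0 1) (D 1 0) (D 1 1)
    (E 0 0) (E 1 0) (E 0 1) (E 1 1) (F 0 0) (F 0 1) (F 1 0) (F 1 1)
    (by linear_combination htrAB) (by linear_combination htrCD)
    (by linear_combination h1a) (by linear_combination h1b)
    (by linear_combination h1c) (by linear_combination h1d)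
    (by linear_combination h2a) (by linear_combination h2b)
    (by rcases h2c with hz|hz <;> rw [hz] <;> ring) (by linear_combination h2d)
    (by linear_combination h3a) (by rcases h3b with hz|hz <;> rw [hz] <;> ring)
    (by linear_combination h3c) (by linear_combination h3d)
    (by linear_combination h4a) (by linear_combination h4b)
    (by linear_combination h4c) (by linear_combination h4d)
  rcases hkey with ⟨hc1, hc2, hc3, hc4, hd1, hd2, hd3, hd4⟩ |
    ⟨hc1, hc2, hc3, hc4, hd1, hd2, hd3, hd4⟩
  · have hCA : C = A := by
      rw [Matrix.eta_fin_two C, Matrix.eta_fin_two A, hc1, hc2, hc3, hc4]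
    have hDB : D = B := by
      rw [Matrix.eta_fin_two D, Matrix.eta_fin_two B, hd1, hd2, hd3, hd4]
    refine Or.inl ⟨hCA, hDB, fun X => ?_⟩
    have hX := h X
    rw [hCA, hDB] at hX
    rw [← hX]
    exact lem1 A B X
  · have hCB : C = !![0, 1; -1, 0] * Bᵀ * (!![0, 1; -1, 0] : Matrix (Fin 2) (Fin 2) ℂ)ᵀ := by
      rw [lemJ B, Matrix.eta_fin_two C, hc1, hc2, hc3, hc4]
    have hDA : D = !![0, 1; -1, 0] * Aᵀ * (!![0, 1; -1, 0] : Matrix (Fin 2) (Fin 2) ℂ)ᵀ := by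
      rw [lemJ A, Matrix.eta_fin_two D, hd1, hd2, hd3, hd4]
    refine Or.inr ⟨hCB, hDA, fun X => ?_⟩
    have hX := h X
    rw [hCB, hDA] at hX
    rw [← hX]
    exact lem2 A B X
end

section
/- Let A, B, C, D ∈ M₃(ℂ) with tr(A)=tr(B)=tr(C)=tr(D), C = A, D = B, and suppose AX + XB + (AX + XB)ᵀ = tr(EX)·F for all X ∈ M₃(ℂ) and some fixed E, F ∈ M₃(ℂ). Then A = B = 0. -/
/-!
Write `L X = AX + XB + (AX + XB)ᵀ`. Testing the hypothesis on matrix units gives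
`L (single i j 1) = E j i • F`. If some `E j i ≠ 0`, then every entry of `F` away from the rows
and columns `i, j` vanishes; a third index `m` carries this, through `L` of the matrix units at
`(i, m)`, `(m, j)` and `(m, m)`, to `A * single i j 1 + single i j 1 * B = 0`, hence `F = 0`.
So `L = 0` in every case, which forces `A = c • 1` and `B = -c • 1`; equal traces give `c = 0`.
-/
open Matrix

variable {ι K : Type*} [Fintype ι] [DecidableEq ι] [Field K]

def symmSylvester (A B X : Matrix ι ι K) : Matrix ι ι K :=
  A * X + X * B + (A * X + X * B)ᵀ

section Entries

variable (A B : Matrix ι ι K) {i j k : ι}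

omit [DecidableEq ι] in
lemma symmSylvester_apply_comm (X : Matrix ι ι K) (k l : ι) :
    symmSylvester A B X k l = symmSylvester A B X l k := by
  simp only [symmSylvester, Matrix.add_apply, transpose_apply]
  ring

lemma symmSylvester_single_apply (i j k l : ι) :
    symmSylvester A B (single i j 1) k l =
      (if j = l then A k i else 0) + (if i = k then B j l else 0) +
        (if j = k then A l i else 0) + (if i = l then B j k else 0) := by
  simp [symmSylvester, mul_apply, single, ite_and, add_assoc]

lemma symmSylvester_single_apply_right_right (hij : i ≠ j) :
    symmSylvester A B (single i j 1) j j = 2 * A j i := by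
  simp [symmSylvester_single_apply, hij, two_mul]

lemma symmSylvester_single_apply_left_left (hij : i ≠ j) :
    symmSylvester A B (single i j 1) i i = 2 * B j i := by
  simp [symmSylvester_single_apply, hij.symm, two_mul]

lemma symmSylvester_single_apply_left_right (hij : i ≠ j) :
    symmSylvester A B (single i j 1) i j = A i i + B j j := by
  simp [symmSylvester_single_apply, hij, hij.symm]

lemma symmSylvester_single_self_apply_self :
    symmSylvester A B (single i i 1) i i = 2 * (A i i + B i i) := by
  simp only [symmSylvester_single_apply, if_true]
  ring

lemma symmSylvester_single_apply_of_ne {l : ι} (hki : k ≠ i) (hkj : k ≠ j) (hli : l ≠ i)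
    (hlj : l ≠ j) : symmSylvester A B (single i j 1) k l = 0 := by
  simp [symmSylvester_single_apply, hki.symm, hkj.symm, hli.symm, hlj.symm]

lemma symmSylvester_single_apply_right (hki : k ≠ i) (hkj : k ≠ j) :
    symmSylvester A B (single i j 1) k j = A k i + if i = j then B j k else 0 := by
  simp [symmSylvester_single_apply, hki.symm, hkj.symm]

lemma symmSylvester_single_apply_left (hki : k ≠ i) (hkj : k ≠ j) :
    symmSylvester A B (single i j 1) i k = B j k + if i = j then A k i else 0 := by
  simp [symmSylvester_single_apply, hki.symm, hkj.symm, eq_comm (a := j)]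

end Entries

lemma trace_mul_single_one (E : Matrix ι ι K) (i j : ι) : (E * single i j 1).trace = E j i := by
  simp [trace_mul_single]

lemma mul_single_add_single_mul_eq_zero {A B : Matrix ι ι K} {i j : ι}
    (hA : ∀ k ≠ i, A k i = 0) (hB : ∀ l ≠ j, B j l = 0) (hAB : A i i + B j j = 0) :
    A * single i j 1 + single i j 1 * B = 0 := by
  ext k l
  rcases eq_or_ne k i with rfl | hk <;> rcases eq_or_ne l j with rfl | hl
  · simpa [mul_apply, single, ite_and] using hAB
  · simp [mul_apply, single, ite_and, hl.symm, hB l hl]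
  · simp [mul_apply, single, ite_and, hk.symm, hA k hk]
  · simp [mul_apply, single, ite_and, hk.symm, hl.symm]

section RankOne

variable {A B E F : Matrix ι ι K} {i j k l m : ι}

lemma symmSylvester_single_apply_of_eq_trace_smul
    (h : ∀ X, symmSylvester A B X = (E * X).trace • F) (i j k l : ι) :
    symmSylvester A B (single i j 1) k l = E j i * F k l := by
  simp [h, trace_mul_single_one]

lemma apply_eq_zero_of_symmSylvester_eq_trace_smul
    (h : ∀ X, symmSylvester A B X = (E * X).trace • F)
    (hE : E j i ≠ 0) (hkl : symmSylvester A B (single i j 1) k l = 0) : F k l = 0 := by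
  rw [symmSylvester_single_apply_of_eq_trace_smul h] at hkl
  exact (mul_eq_zero.1 hkl).resolve_left hE

lemma apply_comm_of_symmSylvester_eq_trace_smul
    (h : ∀ X, symmSylvester A B X = (E * X).trace • F)
    (hE : E j i ≠ 0) (k l : ι) : F k l = F l k := by
  have := symmSylvester_apply_comm A B (single i j 1) k l
  simp only [symmSylvester_single_apply_of_eq_trace_smul h] at this
  exact mul_left_cancel₀ hE this

variable [NeZero (2 : K)]

lemma eq_zero_off_pair_of_symmSylvester_eq_trace_smul
    (h : ∀ X, symmSylvester A B X = (E * X).trace • F)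
    (hE : E j i ≠ 0) (hmi : m ≠ i) (hmj : m ≠ j) :
    A m i = 0 ∧ B j m = 0 ∧ F m m = 0 ∧ F m j = 0 ∧ F i m = 0 := by
  have hL := symmSylvester_single_apply_of_eq_trace_smul h
  have hFmm : F m m = 0 := apply_eq_zero_of_symmSylvester_eq_trace_smul h hE
    (symmSylvester_single_apply_of_ne A B hmi hmj hmi hmj)
  have hAmi : A m i = 0 := by
    have := hL i m m m
    rw [symmSylvester_single_apply_right_right A B hmi.symm, hFmm, mul_zero] at this
    simpa [two_ne_zero] using this
  have hBjm : B j m = 0 := by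
    have := hL m j m m
    rw [symmSylvester_single_apply_left_left A B hmj, hFmm, mul_zero] at this
    simpa [two_ne_zero] using this
  refine ⟨hAmi, hBjm, hFmm, ?_, ?_⟩ <;>
    apply apply_eq_zero_of_symmSylvester_eq_trace_smul h hE
  · simp [symmSylvester_single_apply_right A B hmi hmj, hAmi, hBjm]
  · simp [symmSylvester_single_apply_left A B hmi hmj, hAmi, hBjm]

lemma add_eq_zero_of_symmSylvester_eq_trace_smul
    (h : ∀ X, symmSylvester A B X = (E * X).trace • F)
    (hE : E j i ≠ 0) (hmi : m ≠ i) (hmj : m ≠ j) : A i i + B j j = 0 := by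
  obtain ⟨-, -, hFmm, hFmj, hFim⟩ :=
    eq_zero_off_pair_of_symmSylvester_eq_trace_smul h hE hmi hmj
  have hL := symmSylvester_single_apply_of_eq_trace_smul h
  have hAiBm : A i i + B m m = 0 := by
    simpa [symmSylvester_single_apply_left_right A B hmi.symm, hFim] using hL i m i m
  have hAmBj : A m m + B j j = 0 := by
    simpa [symmSylvester_single_apply_left_right A B hmj, hFmj] using hL m j m j
  have hAmBm : A m m + B m m = 0 := by
    simpa [symmSylvester_single_self_apply_self, hFmm, two_ne_zero] using hL m m m m
  linear_combination hAiBm + hAmBj - hAmBm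

lemma eq_zero_of_symmSylvester_eq_trace_smul_of_ne
    (h : ∀ X, symmSylvester A B X = (E * X).trace • F)
    (hE : E j i ≠ 0) (hij : i ≠ j) (hmi : m ≠ i) (hmj : m ≠ j) :
    A j i = 0 ∧ B j i = 0 := by
  obtain ⟨-, -, -, hFmj, hFim⟩ :=
    eq_zero_off_pair_of_symmSylvester_eq_trace_smul h hE hmi hmj
  have hL := symmSylvester_single_apply_of_eq_trace_smul h
  constructor
  · simpa [symmSylvester_single_apply_right A B hij.symm hmj.symm, hmi.symm,
      apply_comm_of_symmSylvester_eq_trace_smul h hE j m, hFmj] using hL i m j m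
  · simpa [symmSylvester_single_apply_left A B hmi.symm hij, hmj,
      apply_comm_of_symmSylvester_eq_trace_smul h hE m i, hFim] using hL m j m i

lemma mul_single_add_single_mul_eq_zero_of_symmSylvester_eq_trace_smul
    (h : ∀ X, symmSylvester A B X = (E * X).trace • F)
    (h3 : ∀ i j : ι, ∃ m, m ≠ i ∧ m ≠ j)
    (hE : E j i ≠ 0) : A * single i j 1 + single i j 1 * B = 0 := by
  obtain ⟨m, hmi, hmj⟩ := h3 i j
  refine mul_single_add_single_mul_eq_zero (fun k hki ↦ ?_) (fun l hlj ↦ ?_)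
    (add_eq_zero_of_symmSylvester_eq_trace_smul h hE hmi hmj)
  · rcases eq_or_ne k j with rfl | hkj
    · exact (eq_zero_of_symmSylvester_eq_trace_smul_of_ne h hE hki.symm hmi hmj).1
    · exact (eq_zero_off_pair_of_symmSylvester_eq_trace_smul h hE hki hkj).1
  · rcases eq_or_ne l i with rfl | hli
    · exact (eq_zero_of_symmSylvester_eq_trace_smul_of_ne h hE hlj hmi hmj).2
    · exact (eq_zero_off_pair_of_symmSylvester_eq_trace_smul h hE hli hlj).2.1

theorem symmSylvester_eq_zero_of_eq_trace_smul
    (h : ∀ X, symmSylvester A B X = (E * X).trace • F)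
    (h3 : ∀ i j : ι, ∃ m, m ≠ i ∧ m ≠ j)
    (X : Matrix ι ι K) : symmSylvester A B X = 0 := by
  suffices E = 0 ∨ F = 0 by rcases this with rfl | rfl <;> simp [h]
  refine or_iff_not_imp_left.2 fun hE ↦ ?_
  obtain ⟨j, i, hji⟩ : ∃ j i, E j i ≠ 0 := by
    by_contra! hE0
    exact hE (ext hE0)
  have := h (single i j 1)
  rw [symmSylvester, mul_single_add_single_mul_eq_zero_of_symmSylvester_eq_trace_smul h h3 hji,
    trace_mul_single_one] at this
  simpa [hji] using this.symm

end RankOne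

theorem exists_eq_smul_one_of_symmSylvester_eq_zero [NeZero (2 : K)] {A B : Matrix ι ι K}
    (h : ∀ X, symmSylvester A B X = 0) : ∃ c : K, A = c • 1 ∧ B = -c • 1 := by
  have hA (k i : ι) (hki : k ≠ i) : A k i = 0 := by
    simpa [symmSylvester_single_apply_right_right A B hki.symm, two_ne_zero]
      using congr_fun₂ (h (single i k 1)) k k
  have hB (j i : ι) (hji : j ≠ i) : B j i = 0 := by
    simpa [symmSylvester_single_apply_left_left A B hji.symm, two_ne_zero]
      using congr_fun₂ (h (single i j 1)) i i
  have hAB (k l : ι) : A k k + B l l = 0 := by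
    rcases eq_or_ne k l with rfl | hkl
    · simpa [symmSylvester_single_self_apply_self, two_ne_zero]
        using congr_fun₂ (h (single k k 1)) k k
    · simpa [symmSylvester_single_apply_left_right A B hkl]
        using congr_fun₂ (h (single k l 1)) k l
  rcases isEmpty_or_nonempty ι with hι | ⟨⟨i⟩⟩
  · exact ⟨0, Subsingleton.elim _ _, Subsingleton.elim _ _⟩
  refine ⟨A i i, ?_, ?_⟩ <;> ext k l <;> rcases eq_or_ne k l with rfl | hkl
  · simpa using by linear_combination hAB k i - hAB i i
  · simp [hkl, hA k l hkl]
  · simpa using by linear_combination hAB i k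
  · simp [hkl, hB k l hkl]

theorem eq_zero_of_eq_smul_one_of_trace_eq [CharZero K] {A B : Matrix ι ι K} {c : K}
    (hA : A = c • 1) (hB : B = -c • 1) (htr : A.trace = B.trace) : A = 0 ∧ B = 0 := by
  subst hA hB
  have hc : (Fintype.card ι : K) * c = 0 := by
    simp only [trace_smul, trace_one, smul_eq_mul] at htr
    linear_combination htr / 2
  rcases mul_eq_zero.1 hc with hι | rfl
  · have : IsEmpty ι := Fintype.card_eq_zero_iff.1 (by exact_mod_cast hι)
    exact ⟨Subsingleton.elim _ _, Subsingleton.elim _ _⟩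
  · simp

theorem stmt11 (A B E F : Matrix (Fin 3) (Fin 3) ℂ)
    (htr : A.trace = B.trace)
    (h : ∀ X : Matrix (Fin 3) (Fin 3) ℂ,
      A * X + X * B + (A * X + X * B)ᵀ = (E * X).trace • F) :
    A = 0 ∧ B = 0 := by
  have hL := symmSylvester_eq_zero_of_eq_trace_smul h (by decide)
  obtain ⟨c, hA, hB⟩ := exists_eq_smul_one_of_symmSylvester_eq_zero hL
  exact eq_zero_of_eq_smul_one_of_trace_eq hA hB htr
end

section
/- Let A ∈ M₃(ℂ) and suppose the linear map Y ↦ AY + YAᵀ on the space of skew-symmetric 3×3 complex matrices has image of dimension at most 1. Then rank(A − tr(A)I₃) ≤ 1, i.e., A = τ_{u,v} = uvᵀ − ½⟨u,v⟩I₃ for some u, v ∈ ℂ³. -/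
open Matrix

/-- The "hat" map sending a vector to the corresponding skew-symmetric matrix. -/
noncomputable def hatMap : (Fin 3 → ℂ) →ₗ[ℂ] Matrix (Fin 3) (Fin 3) ℂ where
  toFun w := !![0, -w 2, w 1; w 2, 0, -w 0; -w 1, w 0, 0]
  map_add' u v := by
    ext i j
    fin_cases i <;> fin_cases j <;> simp <;> ring
  map_smul' c v := by
    ext i j
    fin_cases i <;> fin_cases j <;> simp <;> ring

lemma hatMap_injective : Function.Injective hatMap := by
  intro u v huv
  funext i
  fin_cases i
  · simpa [hatMap] using congrFun (congrFun huv 2) 1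
  · simpa [hatMap] using congrFun (congrFun huv 0) 2
  · simpa [hatMap] using congrFun (congrFun huv 1) 0

lemma skew_eq_hat (Y : Matrix (Fin 3) (Fin 3) ℂ) (hY : Yᵀ = -Y) :
    Y = hatMap ![Y 2 1, Y 0 2, Y 1 0] := by
  have h : ∀ i j, Y j i = -Y i j := by
    intro i j
    have := congrFun (congrFun hY i) j
    simpa using this
  ext i j
  fin_cases i <;> fin_cases j <;>
    simp [hatMap] <;>
    first
      | linear_combination (1/2 : ℂ) * h 0 0
      | linear_combination (1/2 : ℂ) * h 1 1
      | linear_combination (1/2 : ℂ) * h 2 2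
      | linear_combination - h 0 1
      | linear_combination - h 0 2
      | linear_combination - h 1 2
      | linear_combination h 0 1
      | linear_combination h 0 2
      | linear_combination h 1 2

theorem stmt12 (A : Matrix (Fin 3) (Fin 3) ℂ)
    (h : Module.finrank ℂ
      (Submodule.span ℂ {M : Matrix (Fin 3) (Fin 3) ℂ |
        ∃ Y : Matrix (Fin 3) (Fin 3) ℂ, Yᵀ = -Y ∧ M = A * Y + Y * Aᵀ}) ≤ 1) :
    ∃ u v : Fin 3 → ℂ,
      A = vecMulVec u v - ((1 / 2 : ℂ) * (u ⬝ᵥ v)) • (1 : Matrix (Fin 3) (Fin 3) ℂ) := by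
  set t := A.trace with ht
  set B : Matrix (Fin 3) (Fin 3) ℂ := t • 1 - Aᵀ with hB
  have htr : t = A 0 0 + A 1 1 + A 2 2 := by
    simp [ht, Matrix.trace, Fin.sum_univ_three]
  -- key identity
  have key : ∀ w : Fin 3 → ℂ,
      A * hatMap w + hatMap w * Aᵀ = hatMap (B *ᵥ w) := by
    intro w
    ext i j
    fin_cases i <;> fin_cases j <;>
      simp [hatMap, Matrix.mul_apply, Matrix.mulVec, Matrix.vecMul, dotProduct,
        Fin.sum_univ_three, hB, Matrix.sub_apply, Matrix.smul_apply,
        Matrix.one_apply, Matrix.transpose_apply, htr] <;> ring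
  -- hat of skew
  have hskew : ∀ w : Fin 3 → ℂ, (hatMap w)ᵀ = -(hatMap w) := by
    intro w
    ext i j
    fin_cases i <;> fin_cases j <;> simp [hatMap]
  -- the set S equals hatMap '' range of B.mulVec
  have hset : {M : Matrix (Fin 3) (Fin 3) ℂ |
        ∃ Y : Matrix (Fin 3) (Fin 3) ℂ, Yᵀ = -Y ∧ M = A * Y + Y * Aᵀ} =
      ⇑hatMap '' Set.range (B.mulVec) := by
    ext M
    constructor
    · rintro ⟨Y, hY, rfl⟩
      have hYw := skew_eq_hat Y hY
      have E : A * Y + Y * Aᵀ = hatMap (B *ᵥ ![Y 2 1, Y 0 2, Y 1 0]) := by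
        conv_lhs => rw [hYw]
        exact key _
      exact ⟨_, ⟨_, rfl⟩, E.symm⟩
    · rintro ⟨_, ⟨w, rfl⟩, rfl⟩
      exact ⟨hatMap w, hskew w, (key w).symm⟩
  -- transfer the finrank bound
  have hrange : Submodule.span ℂ (Set.range (B.mulVec)) = LinearMap.range B.mulVecLin := by
    have : Set.range (B.mulVec) = ↑(LinearMap.range B.mulVecLin) := by
      ext x; simp [LinearMap.mem_range, Matrix.mulVecLin]
    rw [this, Submodule.span_eq]
  have hfr : Module.finrank ℂ (LinearMap.range B.mulVecLin) ≤ 1 := by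
    rw [hset, Submodule.span_image, hrange] at h
    rwa [(Submodule.equivMapOfInjective hatMap hatMap_injective
      (LinearMap.range B.mulVecLin)).finrank_eq]
  -- get a principal generator
  obtain ⟨u, hu⟩ := (Submodule.finrank_le_one_iff_isPrincipal _).mp hfr
  -- columns of B are multiples of u
  have hcol : ∀ j : Fin 3, ∃ c : ℂ, ∀ i, B i j = c * u i := by
    intro j
    have hmem : B *ᵥ Pi.single j 1 ∈ LinearMap.range B.mulVecLin := ⟨Pi.single j 1, rfl⟩
    rw [hu] at hmem
    obtain ⟨c, hc⟩ := Submodule.mem_span_singleton.mp hmem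
    refine ⟨c, fun i => ?_⟩
    have h2 := congrFun hc i
    simp [Matrix.mulVec_single] at h2
    exact h2.symm
  choose c hc using hcol
  -- entries of A
  have hA : ∀ i j, A i j = (if i = j then t else 0) - c i * u j := by
    intro i j
    have h1 : B j i = t * (if j = i then 1 else 0) - A i j := by
      simp [hB, Matrix.sub_apply, Matrix.smul_apply, Matrix.one_apply]
    rw [hc i j] at h1
    by_cases hij : i = j
    · subst hij
      simp only [eq_self_iff_true, if_true, mul_one] at h1 ⊢
      linear_combination h1
    · have hji : ¬ j = i := fun e => hij e.symm
      simp only [if_neg hij, if_neg hji, mul_zero] at h1 ⊢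
      linear_combination h1
  -- trace identity: 2t = ∑ c i * u i
  have htr2 : t + t = c 0 * u 0 + c 1 * u 1 + c 2 * u 2 := by
    have e0 := hA 0 0
    have e1 := hA 1 1
    have e2 := hA 2 2
    simp only [eq_self_iff_true, if_true] at e0 e1 e2
    linear_combination -htr - e0 - e1 - e2
  refine ⟨fun i => -(c i), u, ?_⟩
  ext i j
  have hd : (fun i => -(c i)) ⬝ᵥ u = -(c 0 * u 0 + c 1 * u 1 + c 2 * u 2) := by
    simp [dotProduct, Fin.sum_univ_three]
    try ring
  rw [Matrix.sub_apply, Matrix.smul_apply, vecMulVec_apply, hd, hA i j]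
  by_cases hij : i = j
  · subst hij
    simp only [eq_self_iff_true, if_true, Matrix.one_apply_eq, smul_eq_mul, mul_one]
    linear_combination (1/2 : ℂ) * htr2
  · simp only [if_neg hij, Matrix.one_apply_ne hij, smul_eq_mul, mul_zero]
    ring
end

section
/- For any homomorphism π: G → O(2) from a group G into the 2×2 real orthogonal group (viewed in M₂(ℂ)) and any P ∈ M₂(ℂ), the functions f(x) = tr(P π(x)), g(x) = −tr(P π(x)), h(x) = −tr(JP π(x)), k(y) = tr(J π(y)) satisfy f(xy) + g(xy⁻¹) = h(x)k(y) for all x, y ∈ G. -/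
/-!
Since `π y⁻¹ = (π y)ᵀ`, the left side is `tr (P π(x) (Y - Yᵀ))` with `Y = π y`. For a `2 × 2`
matrix, `Y - Yᵀ = -tr (J Y) • J`, and cyclicity of the trace turns `tr (P π(x) J)` into
`tr (J P π(x))`.
-/

open Matrix

namespace Matrix

section
-- the star structure through which `orthogonalGroup` is defined as a unitary group
attribute [local instance] starRingOfComm

theorem orthogonalGroup.coe_inv {n R : Type*} [DecidableEq n] [Fintype n] [CommRing R]
    (A : orthogonalGroup n R) :
    ((A⁻¹ : orthogonalGroup n R) : Matrix n n R) = (A : Matrix n n R)ᵀ :=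
  UnitaryGroup.inv_apply A

end

variable {R : Type*} [CommRing R]

theorem sub_transpose_fin_two (Y : Matrix (Fin 2) (Fin 2) R) :
    Y - Yᵀ = -(!![0, 1; -1, 0] * Y).trace • !![0, 1; -1, 0] := by
  ext i j
  fin_cases i <;> fin_cases j <;>
    simp [trace_fin_two, vecMul, dotProduct, Fin.sum_univ_two] <;> ring

theorem trace_mul_sub_trace_mul_transpose_fin_two (P A Y : Matrix (Fin 2) (Fin 2) R) :
    (P * (A * Y)).trace - (P * (A * Yᵀ)).trace
      = -(!![0, 1; -1, 0] * P * A).trace * (!![0, 1; -1, 0] * Y).trace := by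
  rw [← trace_sub, ← mul_sub, ← mul_sub, sub_transpose_fin_two, mul_smul_comm, mul_smul_comm,
    trace_smul, smul_eq_mul, ← mul_assoc, trace_mul_comm (P * A), ← mul_assoc, neg_mul_comm,
    mul_comm]

end Matrix

theorem stmt18 {G : Type*} [Group G]
    (π : G →* Matrix.orthogonalGroup (Fin 2) ℝ) (P : Matrix (Fin 2) (Fin 2) ℂ)
    (πc : G → Matrix (Fin 2) (Fin 2) ℂ)
    (hπc : ∀ g : G, πc g =
      ((π g : Matrix.orthogonalGroup (Fin 2) ℝ) : Matrix (Fin 2) (Fin 2) ℝ).map (Complex.ofReal ·)) :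
    ∀ x y : G,
      (P * πc (x * y)).trace + (-(P * πc (x * y⁻¹)).trace)
        = (-(!![0, 1; -1, 0] * P * πc x).trace) * ((!![0, 1; -1, 0] : Matrix (Fin 2) (Fin 2) ℂ) * πc y).trace := by
  intro x y
  have hmul (a b : G) : πc (a * b) = πc a * πc b := by
    simp only [hπc, map_mul, UnitaryGroup.mul_val]
    exact Matrix.map_mul (f := Complex.ofRealHom)
  have hinv : πc y⁻¹ = (πc y)ᵀ := by
    rw [hπc, hπc, map_inv, orthogonalGroup.coe_inv, transpose_map]
  rw [hmul, hmul, hinv, ← sub_eq_add_neg]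
  exact trace_mul_sub_trace_mul_transpose_fin_two P (πc x) (πc y)
end

section
/- For 2×2 complex matrices A, B with tr(A) = tr(B), the r-admissible tuples (A,B,−A,−B,−(JA+BJ)⊗J) and (A,B,−Bᵀ,−Aᵀ,−J⊗(AJ+JB)) coincide if and only if B = Aᵀ; moreover if tr(A)=0 and B = Aᵀ, the tuple is homogeneous (i.e., (JA+BJ) ⊗ J = 0), and conversely homogeneity implies tr(A)=0 and B = Aᵀ. -/
open Matrix TensorProduct

private lemma key1 (A : Matrix (Fin 2) (Fin 2) ℂ) :
    !![0, 1; -1, 0] * A + Aᵀ * !![0, 1; -1, 0] = A.trace • !![0, 1; -1, 0] := by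
  ext i j
  fin_cases i <;> fin_cases j <;>
    simp [Matrix.mul_apply, Matrix.trace, Fin.sum_univ_two, Matrix.diag, Matrix.vecMul, Matrix.vecHead, Matrix.vecTail, dotProduct] <;> ring

private lemma key2 (A : Matrix (Fin 2) (Fin 2) ℂ) :
    A * !![0, 1; -1, 0] + !![0, 1; -1, 0] * Aᵀ = A.trace • !![0, 1; -1, 0] := by
  ext i j
  fin_cases i <;> fin_cases j <;>
    simp [Matrix.mul_apply, Matrix.trace, Fin.sum_univ_two, Matrix.diag, Matrix.vecMul, Matrix.vecHead, Matrix.vecTail, dotProduct] <;> ring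

set_option synthInstance.maxHeartbeats 400000 in
private lemma tmulJ_zero {x : Matrix (Fin 2) (Fin 2) ℂ}
    (h : (x ⊗ₜ[ℂ] !![0, 1; -1, 0] :
      Matrix (Fin 2) (Fin 2) ℂ ⊗[ℂ] Matrix (Fin 2) (Fin 2) ℂ) = 0) : x = 0 := by
  classical
  let φ : Matrix (Fin 2) (Fin 2) ℂ →ₗ[ℂ] ℂ :=
    { toFun := fun M => M 0 1, map_add' := fun _ _ => rfl, map_smul' := fun _ _ => rfl }
  have hφ : φ !![0, 1; -1, 0] = 1 := rfl
  have h2 := congrArg (fun z => (TensorProduct.rid ℂ (Matrix (Fin 2) (Fin 2) ℂ))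
    ((TensorProduct.map LinearMap.id φ) z)) h
  simpa [hφ] using h2

theorem stmt19 (A B : Matrix (Fin 2) (Fin 2) ℂ) (htr : A.trace = B.trace) :
    letI J : Matrix (Fin 2) (Fin 2) ℂ := !![0, 1; -1, 0]
    ((-A = -Bᵀ ∧ -B = -Aᵀ ∧
        ((-(J * A + B * J)) ⊗ₜ[ℂ] J : Matrix (Fin 2) (Fin 2) ℂ ⊗[ℂ] Matrix (Fin 2) (Fin 2) ℂ)
          = (-J) ⊗ₜ[ℂ] (A * J + J * B)) ↔ B = Aᵀ) ∧
    ((((-(J * A + B * J)) ⊗ₜ[ℂ] J : Matrix (Fin 2) (Fin 2) ℂ ⊗[ℂ] Matrix (Fin 2) (Fin 2) ℂ) = 0)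
      ↔ (A.trace = 0 ∧ B = Aᵀ)) := by
  constructor
  · constructor
    · rintro ⟨h1, -, -⟩
      have : A = Bᵀ := by simpa using h1
      simp [this]
    · rintro rfl
      refine ⟨by simp, by simp, ?_⟩
      rw [key1 A, key2 A, ← smul_neg, smul_tmul]
  · constructor
    · intro h
      have hx : !![0, 1; -1, 0] * A + B * !![0, 1; -1, 0] = 0 := by
        have := tmulJ_zero h
        rwa [neg_eq_zero] at this
      -- entrywise consequences
      have e : ∀ i j : Fin 2,
          ((!![0, 1; -1, 0] * A + B * !![0, 1; -1, 0] : Matrix (Fin 2) (Fin 2) ℂ)) i j = 0 :=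
        fun i j => by rw [hx]; simp
      have e00 := e 0 0
      have e01 := e 0 1
      have e10 := e 1 0
      have e11 := e 1 1
      simp [Matrix.mul_apply, Fin.sum_univ_two, Matrix.vecMul, Matrix.vecHead, Matrix.vecTail, dotProduct] at e00 e01 e10 e11
      have htrB : B.trace = B 0 0 + B 1 1 := by
        simp [Matrix.trace, Fin.sum_univ_two, Matrix.diag]
      have htrA : A.trace = A 0 0 + A 1 1 := by
        simp [Matrix.trace, Fin.sum_univ_two, Matrix.diag]
      have hsum : A.trace + A.trace = 0 := by
        calc A.trace + A.trace = A.trace + B.trace := by rw [htr]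
          _ = (A 0 0 + A 1 1) + (B 0 0 + B 1 1) := by rw [htrA, htrB]
          _ = 0 := by linear_combination e01 - e10
      have htr0 : A.trace = 0 := by linear_combination hsum / 2
      refine ⟨htr0, ?_⟩
      have had : A 0 0 + A 1 1 = 0 := by rw [← htrA]; exact htr0
      ext i j
      fin_cases i <;> fin_cases j <;> simp only [Matrix.transpose_apply, Fin.zero_eta, Fin.mk_one]
      · linear_combination e01 - had
      · linear_combination -e00
      · linear_combination e11
      · linear_combination -e10 - had
    · rintro ⟨ht, rfl⟩
      have : !![0, 1; -1, 0] * A + Aᵀ * !![0, 1; -1, 0] = 0 := by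
        rw [key1 A, ht, zero_smul]
      rw [this, neg_zero, zero_tmul]
end
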